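/- Let q ≥ 2 be an integer, γ ∈ ℝ, and f(n) = e(γ s_q(n)) where s_q is the sum-of-digits function in base q. For integers 0 ≤ κ₁ ≤ κ₂ and F_{κ₁,κ₂}(t) = q^{-(κ₂-κ₁)} Σ_{0≤u<q^{κ₂-κ₁}} f(q^{κ₁}u) e(-tu/q^{κ₂-κ₁}), one has |F_{κ₁,κ₂}(t)| ≤ exp(π²/48 - (κ₂-κ₁)·(π²(q-1))/(12(q+1))·‖(q-1)γ‖²) for all real t. -/

import Mathlib

/-- The normalized discrete Fourier transform
`F_{κ₁,κ₂}(t) = q^{-(κ₂-κ₁)} Σ_{0≤u<q^{κ₂-κ₁}} f(q^{κ₁}u) e(-tu/q^{κ₂-κ₁})`. -/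
noncomputable def Fq (q : ℕ) (f : ℕ → ℂ) (a b : ℕ) (t : ℝ) : ℂ :=
  (1 / (q : ℂ) ^ (b - a)) * ∑ u ∈ Finset.range (q ^ (b - a)),
    f (q ^ a * u) * Complex.exp (2 * Real.pi * Complex.I * (-(t * u) / (q : ℝ) ^ (b - a)))

/-!
Writing `u < q^L` (`L = κ₂ - κ₁`) in base `q` factors the sum as
`F = ∏_{j<L} q⁻¹ Σ_{d<q} e(x_j d)` with `x_j = γ - t q^{j-L}`, and consecutive frequencies
satisfy `q x_j - x_{j+1} = (q-1)γ`. The absolute value `|sin πqx| / (q |sin πx|)` of a factor is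
at most `1`, at most `1/2` once `‖x‖ ≥ 1/q`, and at most `exp(-π²(q²-2)‖x‖²/6)` below that
(Euler's sine product). Using `‖(q-1)γ‖ ≤ q‖x_j‖ + ‖x_{j+1}‖` when both are below `1/q`, and
`A ‖·‖² ≤ π²/24` otherwise, every product of two neighbouring factors is at most
`exp(-A ‖(q-1)γ‖²)` with `A = π²(q-1)/(6(q+1))`. Squaring the product of all `L` factors and
pairing neighbours gives `exp(-(L-1) A ‖(q-1)γ‖² / 2)`, and `A/8 ≤ π²/48` pays for the `-1`.
-/
open Finset Real Filter Topology

lemma sum_range_mul_eq_sum_sum {M : Type*} [AddCommMonoid M] (f : ℕ → M) (m n : ℕ) :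
    ∑ u ∈ range (m * n), f u = ∑ i ∈ range m, ∑ d ∈ range n, f (d + n * i) := by
  rw [sum_range, ← Fintype.sum_equiv finProdFinEquiv (fun p => f (p.2 + n * p.1)) _ (fun _ => rfl),
    Fintype.sum_prod_type, sum_range]
  simp only [sum_range (fun d => f (d + n * _))]

lemma sq_prod_range_succ_le_prod_mul_succ {a : ℕ → ℝ} (h₀ : ∀ j, 0 ≤ a j) (h₁ : ∀ j, a j ≤ 1)
    (n : ℕ) : (∏ j ∈ range (n + 1), a j) ^ 2 ≤ ∏ j ∈ range n, a j * a (j + 1) := by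
  rw [sq]
  nth_rewrite 1 [prod_range_succ']
  rw [prod_range_succ, prod_mul_distrib]
  calc _ = (∏ j ∈ range n, a j) * (∏ j ∈ range n, a (j + 1)) * (a 0 * a n) := by ring
    _ ≤ _ := mul_le_of_le_one_right
        (mul_nonneg (prod_nonneg fun j _ => h₀ j) (prod_nonneg fun j _ => h₀ (j + 1)))
        (mul_le_one₀ (h₁ 0) (h₀ n) (h₁ n))

lemma prod_range_le_exp_of_mul_succ_le {a : ℕ → ℝ} (h₀ : ∀ j, 0 ≤ a j) (h₁ : ∀ j, a j ≤ 1)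
    {B : ℝ} (hB : 0 ≤ B) (hpair : ∀ j, a j * a (j + 1) ≤ exp (-B)) (L : ℕ) :
    ∏ j ∈ range L, a j ≤ exp (B / 2 - L * B / 2) := by
  rcases L with _ | n
  · simpa using div_nonneg hB zero_le_two
  have hsq : (∏ j ∈ range (n + 1), a j) ^ 2 ≤ exp (B / 2 - (n + 1 : ℕ) * B / 2) ^ 2 :=
    calc _ ≤ ∏ j ∈ range n, a j * a (j + 1) := sq_prod_range_succ_le_prod_mul_succ h₀ h₁ n
      _ ≤ ∏ j ∈ range n, exp (-B) := prod_le_prod (fun j _ => mul_nonneg (h₀ j) (h₀ (j + 1)))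
          fun j _ => hpair j
      _ = _ := by
          rw [prod_const, card_range, ← exp_nat_mul, ← exp_nat_mul]
          push_cast; ring_nf
  exact (pow_le_pow_iff_left₀ (prod_nonneg fun j _ => h₀ j) (exp_pos _).le two_ne_zero).1 hsq

lemma hasSum_one_div_succ_sq : HasSum (fun n : ℕ => 1 / ((n : ℝ) + 1) ^ 2) (π ^ 2 / 6) := by
  simpa using (hasSum_nat_add_iff' 1).mpr hasSum_zeta_two

lemma sin_pi_mul_le_mul_exp {x : ℝ} (hx₀ : 0 ≤ x) (hx₁ : x ≤ 1) :
    sin (π * x) ≤ π * x * exp (-(π ^ 2 * x ^ 2 / 6)) := by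
  have hexp : Tendsto (fun n => π * x * exp (-(x ^ 2 * ∑ j ∈ range n, 1 / ((j : ℝ) + 1) ^ 2)))
      atTop (𝓝 (π * x * exp (-(x ^ 2 * (π ^ 2 / 6))))) :=
    ((continuous_exp.tendsto _).comp
      ((hasSum_one_div_succ_sq.tendsto_sum_nat.const_mul (x ^ 2)).neg)).const_mul (π * x)
  rw [show π ^ 2 * x ^ 2 / 6 = x ^ 2 * (π ^ 2 / 6) by ring]
  refine le_of_tendsto_of_tendsto' (tendsto_euler_sin_prod x) hexp fun n => ?_
  gcongr
  rw [mul_sum, ← sum_neg_distrib, exp_sum]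
  refine prod_le_prod (fun j _ => ?_) fun j _ => ?_
  · rw [sub_nonneg, div_le_one (by positivity)]
    have : (1 : ℝ) ≤ j + 1 := by simp
    nlinarith
  · rw [← mul_div_assoc, mul_one]
    exact one_sub_le_exp_neg _

lemma mul_exp_le_sin {y : ℝ} (hy₀ : 0 ≤ y) (hy : y ^ 2 ≤ 3) : y * exp (-(y ^ 2 / 3)) ≤ sin y := by
  have hcubic : y ≤ (y - y ^ 3 / 6) * exp (y ^ 2 / 3) := by
    have h1 : 0 ≤ y - y ^ 3 / 6 := by nlinarith
    have h2 := add_one_le_exp (y ^ 2 / 3)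
    nlinarith [mul_le_mul_of_nonneg_left h2 h1, mul_nonneg (pow_nonneg hy₀ 3) (sub_nonneg.2 hy)]
  rw [exp_neg, ← div_eq_mul_inv, div_le_iff₀ (exp_pos _)]
  exact hcubic.trans (mul_le_mul_of_nonneg_right (sin_ge_sub_cube hy₀) (exp_pos _).le)

lemma half_le_exp_neg_pi_sq_div_24 : 1 / 2 ≤ exp (-(π ^ 2 / 24)) := by
  have hπ : π ^ 2 / 24 ≤ 1 / 2 := by nlinarith [pi_lt_d2, pi_pos]
  have := exp_bound_div_one_sub_of_interval (by positivity) (hπ.trans_lt one_half_lt_one)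
  rw [exp_neg, ← one_div, le_div_iff₀ (exp_pos _)]
  calc 1 / 2 * exp (π ^ 2 / 24) ≤ 1 / 2 * (1 / (1 - π ^ 2 / 24)) := by gcongr
    _ ≤ 1 := by rw [div_mul_div_comm, one_mul, div_le_one (by linarith)]; linarith

lemma abs_sub_round_natCast_mul_sub_le (n : ℕ) (u v : ℝ) :
    |(n * u - v) - round (n * u - v)| ≤ n * |u - round u| + |v - round v| := by
  calc |(n * u - v) - round (n * u - v)| ≤ |(n * u - v) - ((n * round u - round v : ℤ) : ℝ)| :=
        round_le _ _
    _ = |n * (u - round u) - (v - round v)| := by push_cast; ring_nf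
    _ ≤ n * |u - round u| + |v - round v| := by
        simpa only [abs_mul, Nat.abs_cast] using abs_sub (n * (u - round u)) (v - round v)

lemma digits_sum_base_pow_mul {q : ℕ} (hq : 1 < q) (a u : ℕ) :
    (q.digits (q ^ a * u)).sum = (q.digits u).sum := by
  rcases u.eq_zero_or_pos with rfl | hu
  · simp
  · simp [Nat.digits_base_pow_mul hq hu]

lemma digits_sum_add_base_mul {q : ℕ} (hq : 1 < q) {d : ℕ} (hd : d < q) (m : ℕ) :
    (q.digits (d + q * m)).sum = d + (q.digits m).sum := by
  by_cases h : d = 0 ∧ m = 0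
  · simp [h.1, h.2]
  · rw [Nat.digits_add q hq d m hd (by tauto), List.sum_cons]

namespace DigitFourier

noncomputable def e (x : ℝ) : ℂ := Complex.exp (2 * π * Complex.I * x)

lemma e_add (x y : ℝ) : e (x + y) = e x * e y := by
  simp only [e, ← Complex.exp_add]; push_cast; ring_nf

lemma e_intCast (n : ℤ) : e n = 1 := by
  rw [e, ← Complex.exp_int_mul_two_pi_mul_I n]; push_cast; ring_nf

lemma e_mul_natCast (x : ℝ) (n : ℕ) : e (x * n) = e x ^ n := by
  rw [e, e, ← Complex.exp_nat_mul]; push_cast; ring_nf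

lemma norm_e (x : ℝ) : ‖e x‖ = 1 := by
  rw [e, Complex.norm_exp]; simp

lemma norm_e_sub_one (x : ℝ) : ‖e x - 1‖ = 2 * |sin (π * x)| := by
  have := Complex.norm_exp_I_mul_ofReal_sub_one (2 * π * x)
  rw [show 2 * π * x / 2 = π * x by ring, norm_mul, Real.norm_eq_abs, Real.norm_eq_abs,
    abs_two] at this
  rw [← this, e]; push_cast; ring_nf

lemma sum_range_pow_e_digits_sum {q : ℕ} (hq : 1 < q) (γ : ℝ) (L : ℕ) (θ : ℝ) :
    ∑ u ∈ range (q ^ L), e (γ * (q.digits u).sum + θ * u) =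
      ∏ j ∈ range L, ∑ d ∈ range q, e ((γ + θ * q ^ j) * d) := by
  induction L generalizing θ with
  | zero => simp [e]
  | succ L ih =>
    calc ∑ u ∈ range (q ^ (L + 1)), e (γ * (q.digits u).sum + θ * u)
        = ∑ i ∈ range (q ^ L), ∑ d ∈ range q,
            e (γ * (q.digits i).sum + q * θ * i) * e ((γ + θ * q ^ 0) * d) := by
          rw [pow_succ, sum_range_mul_eq_sum_sum]
          refine sum_congr rfl fun i _ => sum_congr rfl fun d hd => ?_
          rw [digits_sum_add_base_mul hq (mem_range.1 hd), ← e_add]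
          push_cast; ring_nf
      _ = _ := by
          rw [← sum_mul_sum, ih, prod_range_succ']
          congr 2 with j
          congr 2 with d
          ring_nf

noncomputable def expAvgNorm (q : ℕ) (x : ℝ) : ℝ := ‖∑ d ∈ range q, e (x * d)‖ / q

lemma norm_Fq_digits_sum_eq_prod {q : ℕ} (hq : 1 < q) (γ : ℝ) (κ₁ κ₂ : ℕ) (t : ℝ) :
    ‖Fq q (fun n => Complex.exp (2 * π * Complex.I * γ * ((q.digits n).sum : ℕ))) κ₁ κ₂ t‖ =
      ∏ j ∈ range (κ₂ - κ₁), expAvgNorm q (γ + -t / q ^ (κ₂ - κ₁) * q ^ j) := by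
  have hsummand : ∀ u : ℕ, Complex.exp (2 * π * Complex.I * γ * ((q.digits (q ^ κ₁ * u)).sum : ℕ)) *
      Complex.exp (2 * π * Complex.I * (-(t * u) / (q : ℝ) ^ (κ₂ - κ₁))) =
        e (γ * (q.digits u).sum + -t / q ^ (κ₂ - κ₁) * u) := by
    intro u
    rw [digits_sum_base_pow_mul hq, e_add, e, e]
    generalize (q.digits u).sum = s
    push_cast; ring_nf
  rw [Fq, sum_congr rfl fun u _ => hsummand u, sum_range_pow_e_digits_sum hq, norm_mul, norm_prod]
  simp only [expAvgNorm, prod_div_distrib, prod_const, card_range]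
  simp [div_eq_inv_mul]

lemma expAvgNorm_nonneg (q : ℕ) (x : ℝ) : 0 ≤ expAvgNorm q x := by
  unfold expAvgNorm; positivity

lemma expAvgNorm_le_one (q : ℕ) (x : ℝ) : expAvgNorm q x ≤ 1 := by
  refine div_le_one_of_le₀ ((norm_sum_le _ _).trans ?_) q.cast_nonneg
  simp [norm_e]

lemma expAvgNorm_add_intCast (q : ℕ) (x : ℝ) (n : ℤ) : expAvgNorm q (x + n) = expAvgNorm q x := by
  unfold expAvgNorm
  congr 2
  refine sum_congr rfl fun d _ => ?_
  rw [add_mul, e_add, ← Int.cast_natCast, ← Int.cast_mul, e_intCast, mul_one]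

lemma expAvgNorm_neg (q : ℕ) (x : ℝ) : expAvgNorm q (-x) = expAvgNorm q x := by
  unfold expAvgNorm
  rw [← Complex.norm_conj, map_sum]
  congr 3 with d
  rw [e, e, ← Complex.exp_conj]
  simp only [map_mul, map_ofNat, Complex.conj_ofReal, Complex.conj_I]
  push_cast; ring_nf

lemma expAvgNorm_abs_sub_round (q : ℕ) (x : ℝ) : expAvgNorm q |x - round x| = expAvgNorm q x := by
  rcases abs_choice (x - round x) with h | h <;> rw [h]
  · rw [sub_eq_add_neg, ← Int.cast_neg, expAvgNorm_add_intCast]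
  · rw [neg_sub, sub_eq_neg_add, expAvgNorm_add_intCast, expAvgNorm_neg]

lemma expAvgNorm_eq_abs_sin_div (q : ℕ) {x : ℝ} (hx : sin (π * x) ≠ 0) :
    expAvgNorm q x = |sin (π * (q * x))| / (q * |sin (π * x)|) := by
  have he : e x ≠ 1 := fun h => hx (by simpa [h] using norm_e_sub_one x)
  rw [expAvgNorm, sum_congr rfl fun d _ => e_mul_natCast x d, geom_sum_eq he, norm_div,
    ← e_mul_natCast, norm_e_sub_one, norm_e_sub_one, mul_comm x, div_div, mul_assoc,
    mul_div_mul_left _ _ two_ne_zero, mul_comm |_|]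

lemma expAvgNorm_le_exp {q : ℕ} (hq : 2 ≤ q) {x : ℝ} (hx₀ : 0 ≤ x) (hqx : q * x ≤ 1) :
    expAvgNorm q x ≤ exp (-(π ^ 2 * ((q : ℝ) ^ 2 - 2) / 6 * x ^ 2)) := by
  have hq' : (2 : ℝ) ≤ q := by exact_mod_cast hq
  rcases hx₀.eq_or_lt with rfl | hx
  · simp [expAvgNorm_le_one]
  have hx₁ : x ≤ 1 / 2 := by nlinarith
  have hπx : (π * x) ^ 2 ≤ 3 := by
    have : π * x ≤ 3.15 / 2 := by nlinarith [pi_lt_d2, pi_pos]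
    nlinarith [mul_pos pi_pos hx]
  have hsin : 0 < π * x * exp (-((π * x) ^ 2 / 3)) := by positivity
  have hsin' := hsin.trans_le (mul_exp_le_sin (by positivity) hπx)
  rw [expAvgNorm_eq_abs_sin_div q hsin'.ne', abs_of_pos hsin',
    abs_of_nonneg (sin_nonneg_of_nonneg_of_le_pi (by positivity) (by nlinarith [pi_pos])),
    div_le_iff₀ (by positivity)]
  set E := exp (-(π ^ 2 * ((q : ℝ) ^ 2 - 2) / 6 * x ^ 2))
  have hsplit : exp (-(π ^ 2 * (q * x) ^ 2 / 6)) = E * exp (-((π * x) ^ 2 / 3)) := by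
    rw [← exp_add]; ring_nf
  calc sin (π * (q * x)) ≤ π * (q * x) * exp (-(π ^ 2 * (q * x) ^ 2 / 6)) :=
        sin_pi_mul_le_mul_exp (by positivity) hqx
    _ = E * (q * (π * x * exp (-((π * x) ^ 2 / 3)))) := by rw [hsplit]; ring
    _ ≤ E * (q * sin (π * x)) := by
        gcongr
        exact mul_exp_le_sin (by positivity) hπx

lemma expAvgNorm_le_half {q : ℕ} (hq : 2 ≤ q) {x : ℝ} (hx₀ : 1 / q ≤ x) (hx₁ : x ≤ 1 / 2) :
    expAvgNorm q x ≤ 1 / 2 := by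
  have hq' : (0 : ℝ) < q := by positivity
  have hx : 0 < x := lt_of_lt_of_le (by positivity) hx₀
  have hjordan : 2 * x ≤ sin (π * x) := by
    have := mul_le_sin (x := π * x) (by positivity) (by nlinarith [pi_pos])
    rwa [← mul_assoc, div_mul_cancel₀ _ pi_ne_zero] at this
  have hsin : 0 < sin (π * x) := by linarith
  rw [expAvgNorm_eq_abs_sin_div q hsin.ne', abs_of_pos hsin, div_le_iff₀ (by positivity)]
  rw [div_le_iff₀ hq'] at hx₀
  nlinarith [abs_sin_le_one (π * (q * x))]

noncomputable def decayRate (q : ℕ) : ℝ := π ^ 2 * ((q : ℝ) - 1) / (6 * ((q : ℝ) + 1))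

lemma decayRate_nonneg {q : ℕ} (hq : 1 ≤ q) : 0 ≤ decayRate q := by
  have hq' : (1 : ℝ) ≤ q := by exact_mod_cast hq
  exact div_nonneg (mul_nonneg (sq_nonneg π) (by linarith)) (by positivity)

lemma decayRate_mul_sq_abs_sub_round_le {q : ℕ} (hq : 1 ≤ q) (x : ℝ) :
    decayRate q * |x - round x| ^ 2 ≤ π ^ 2 / 24 := by
  have hrate : decayRate q ≤ π ^ 2 / 6 := by
    rw [decayRate, div_le_div_iff₀ (by positivity) (by norm_num)]
    nlinarith [sq_nonneg π]
  have hsq : |x - round x| ^ 2 ≤ 1 / 4 := by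
    nlinarith [abs_sub_round x, abs_nonneg (x - round x)]
  nlinarith [decayRate_nonneg hq, sq_nonneg |x - round x|]

lemma expAvgNorm_mul_le {q : ℕ} (hq : 2 ≤ q) (u v : ℝ) :
    expAvgNorm q u * expAvgNorm q v ≤
      exp (-(decayRate q * |(q * u - v) - round (q * u - v)| ^ 2)) := by
  have hq' : (2 : ℝ) ≤ q := by exact_mod_cast hq
  set c := |(q * u - v) - round (q * u - v)|
  have hfar : ∀ x : ℝ, 1 / (q : ℝ) ≤ |x - round x| →
      expAvgNorm q x ≤ exp (-(decayRate q * c ^ 2)) := by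
    intro x hx
    rw [← expAvgNorm_abs_sub_round]
    refine (expAvgNorm_le_half hq hx (abs_sub_round x)).trans
      (half_le_exp_neg_pi_sq_div_24.trans ?_)
    gcongr
    exact decayRate_mul_sq_abs_sub_round_le (by omega) _
  rcases le_or_gt (1 / (q : ℝ)) |u - round u| with hu | hu
  · exact (mul_le_of_le_one_right (expAvgNorm_nonneg q u) (expAvgNorm_le_one q v)).trans (hfar u hu)
  rcases le_or_gt (1 / (q : ℝ)) |v - round v| with hv | hv
  · exact (mul_le_of_le_one_left (expAvgNorm_nonneg q v) (expAvgNorm_le_one q u)).trans (hfar v hv)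
  set K := π ^ 2 * ((q : ℝ) ^ 2 - 2) / 6
  have hnear : ∀ x : ℝ, |x - round x| < 1 / q →
      expAvgNorm q x ≤ exp (-(K * |x - round x| ^ 2)) := by
    intro x hx
    rw [← expAvgNorm_abs_sub_round]
    refine expAvgNorm_le_exp hq (abs_nonneg _) ?_
    rw [lt_div_iff₀ (by positivity)] at hx
    linarith
  have hrate : decayRate q * ((q : ℝ) ^ 2 + 1) ≤ K := by
    rw [decayRate, div_mul_eq_mul_div, div_le_div_iff₀ (by positivity) (by norm_num)]
    have : ((q : ℝ) - 1) * (q ^ 2 + 1) * 6 ≤ (q ^ 2 - 2) * (6 * (q + 1)) := by nlinarith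
    nlinarith [mul_le_mul_of_nonneg_left this (sq_nonneg π)]
  have hc : c ^ 2 ≤ ((q : ℝ) ^ 2 + 1) * (|u - round u| ^ 2 + |v - round v| ^ 2) := by
    have hc₀ : 0 ≤ c := abs_nonneg _
    nlinarith [abs_sub_round_natCast_mul_sub_le q u v, sq_nonneg (|u - round u| - q * |v - round v|),
      abs_nonneg (u - round u), abs_nonneg (v - round v)]
  calc expAvgNorm q u * expAvgNorm q v
      ≤ exp (-(K * |u - round u| ^ 2)) * exp (-(K * |v - round v| ^ 2)) :=
        mul_le_mul (hnear u hu) (hnear v hv) (expAvgNorm_nonneg q v) (exp_pos _).le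
    _ ≤ exp (-(decayRate q * c ^ 2)) := by
        rw [← exp_add, exp_le_exp]
        nlinarith [mul_le_mul_of_nonneg_left hc (decayRate_nonneg (by omega : 1 ≤ q)),
          mul_le_mul_of_nonneg_right hrate
            (add_nonneg (sq_nonneg |u - round u|) (sq_nonneg |v - round v|))]

end DigitFourier

open DigitFourier

/-- For `f(n) = e(γ s_q(n))` with `s_q` the base-`q` sum-of-digits function,
`|F_{κ₁,κ₂}(t)| ≤ exp(π²/48 - (κ₂-κ₁)·(π²(q-1))/(12(q+1))·‖(q-1)γ‖²)`. -/
theorem Fq_sum_of_digits_bound (q : ℕ) (hq : 2 ≤ q) (γ : ℝ)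
    (κ₁ κ₂ : ℕ) (hκ : κ₁ ≤ κ₂) (t : ℝ) :
    ‖(Fq q
        (fun n => Complex.exp (2 * Real.pi * Complex.I * γ * ((Nat.digits q n).sum : ℕ)))
        κ₁ κ₂ t)‖
      ≤ Real.exp (Real.pi ^ 2 / 48
          - ((κ₂ : ℝ) - κ₁) * (Real.pi ^ 2 * ((q : ℝ) - 1)) / (12 * ((q : ℝ) + 1))
            * |((q : ℝ) - 1) * γ - round (((q : ℝ) - 1) * γ)| ^ 2) := by
  set c := ((q : ℝ) - 1) * γ
  have hchain : ∀ j : ℕ, (q : ℝ) * (γ + -t / q ^ (κ₂ - κ₁) * q ^ j) -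
      (γ + -t / q ^ (κ₂ - κ₁) * q ^ (j + 1)) = c := fun j => by ring
  rw [norm_Fq_digits_sum_eq_prod (by omega)]
  refine (prod_range_le_exp_of_mul_succ_le (fun _ => expAvgNorm_nonneg q _)
    (fun _ => expAvgNorm_le_one q _) (B := decayRate q * |c - round c| ^ 2)
    (mul_nonneg (decayRate_nonneg (by omega)) (sq_nonneg _))
    (fun j => hchain j ▸ expAvgNorm_mul_le hq _ _) _).trans (exp_le_exp.2 ?_)
  have hrate : π ^ 2 * ((q : ℝ) - 1) / (12 * ((q : ℝ) + 1)) = decayRate q / 2 := by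
    rw [decayRate]; field_simp; ring
  rw [Nat.cast_sub hκ, mul_div_assoc _ (π ^ 2 * ((q : ℝ) - 1)), hrate]
  linarith [decayRate_mul_sq_abs_sub_round_le (by omega : 1 ≤ q) c]
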